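/- If τ_1 = 1 almost surely and the lifetimes are bounded, P(η_{11} ≤ K) = 1, then the colony size attains its stationary distribution exactly in finite time: for every n ≥ K + 1, M_n has the same distribution as 𝓜 (equivalently, d_TV(M_n, 𝓜) = 0 for all n ≥ K + 1). -/

import Mathlib

open MeasureTheory ProbabilityTheory Finset

noncomputable section

variable {Ω : Type*}

/-- `S i = τ 1 + ⋯ + τ i`, the time at which the `i`-th batch of eggs is laid. -/
def renewalS (τ : ℕ → Ω → ℕ) (i : ℕ) (ω : Ω) : ℕ := ∑ k ∈ Finset.Icc 1 i, τ k ω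

/-- `ξ i = Σ_{j=1}^{ζ i} I i j`, the number of eggs of batch `i` that hatch. -/
def batchXi (ζ : ℕ → Ω → ℕ) (I : ℕ → ℕ → Ω → ℕ) (i : ℕ) (ω : Ω) : ℕ :=
  ∑ j ∈ Finset.Icc 1 (ζ i ω), I i j ω

/-- The colony size `M n = Σ_{i=1}^{N_n} Σ_{j=1}^{ξ_i} 1{S_i + η_{ij} ≥ n}`
(the condition `i ≤ N_n` is expressed as `S i ≤ n`, using `S i ≥ i`). -/
def colonyM (τ ζ : ℕ → Ω → ℕ) (I η : ℕ → ℕ → Ω → ℕ) (n : ℕ) (ω : Ω) : ℕ :=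
  ∑ i ∈ Finset.Icc 1 n, ∑ j ∈ Finset.Icc 1 (batchXi ζ I i ω),
    if renewalS τ i ω ≤ n ∧ n ≤ renewalS τ i ω + η i j ω then 1 else 0

/-- The stationary colony size when `τ ≡ 1`, so that the stationary renewal points are
`𝒮 i = i`: `𝓜 = Σ_{i ≥ 1} Σ_{j=1}^{ξ_i} 1{i ≤ η i j + 1}`. -/
def statMone (ζ : ℕ → Ω → ℕ) (I η : ℕ → ℕ → Ω → ℕ) (ω : Ω) : ℕ :=
  ∑' i : ℕ, ∑ j ∈ Finset.Icc 1 (batchXi ζ I (i + 1) ω),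
    if i + 1 ≤ η (i + 1) j ω + 1 then 1 else 0

/-- Total variation distance between (the distributions of) two integer-valued
random variables: `sup_{B ⊆ ℤ} |P(X ∈ B) − P(Y ∈ B)|`. -/
def dTV [MeasurableSpace Ω] (μ : Measure Ω) (X Y : Ω → ℕ) : ℝ :=
  ⨆ B : Set ℤ,
    |(μ ((fun ω => (X ω : ℤ)) ⁻¹' B)).toReal - (μ ((fun ω => (Y ω : ℤ)) ⁻¹' B)).toReal|

/-- All the sources of randomness of the model packaged as one family
(used to state that they are mutually independent). -/
def allVars (τ ζ : ℕ → Ω → ℕ) (I η : ℕ → ℕ → Ω → ℕ) :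
    (ℕ ⊕ ℕ ⊕ (ℕ × ℕ) ⊕ (ℕ × ℕ)) → Ω → ℕ
  | Sum.inl i => τ i
  | Sum.inr (Sum.inl i) => ζ i
  | Sum.inr (Sum.inr (Sum.inl p)) => I p.1 p.2
  | Sum.inr (Sum.inr (Sum.inr p)) => η p.1 p.2

/-- helper: batchXi style sums are measurable -/
lemma measurable_sum_Icc' {α : Type*} [MeasurableSpace α] {f : α → ℕ} (hf : Measurable f)
    {h : ℕ → α → ℕ} (hh : ∀ j, Measurable (h j)) :
    Measurable (fun x => ∑ j ∈ Finset.Icc 1 (f x), h j x) := by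
  apply measurable_to_countable'
  intro k
  have hs : (fun x => ∑ j ∈ Finset.Icc 1 (f x), h j x) ⁻¹' {k}
      = ⋃ c : ℕ, ({x | f x = c} ∩ {x | ∑ j ∈ Finset.Icc 1 c, h j x = k}) := by
    ext x
    simp only [Set.mem_preimage, Set.mem_singleton_iff, Set.mem_iUnion, Set.mem_inter_iff,
      Set.mem_setOf_eq]
    constructor
    · intro hx; exact ⟨f x, rfl, hx⟩
    · rintro ⟨c, hc, hx⟩; rw [hc]; exact hx
  rw [hs]
  exact MeasurableSet.iUnion fun c =>
    (hf (measurableSet_singleton c)).inter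
      ((Finset.measurable_sum _ (fun j _ => hh j)) (measurableSet_singleton k))

def fext {m : ℕ} (v : Fin m → ℕ) (j : ℕ) : ℕ := if h : j - 1 < m then v ⟨j - 1, h⟩ else 0

abbrev Dty (K m : ℕ) := Fin (K+1) → ℕ × (Fin m → ℕ) × (Fin m → ℕ)

def gval (K m : ℕ) (d : Dty K m) : ℕ :=
  ∑ l : Fin (K+1),
    ∑ j ∈ Finset.Icc 1 (∑ j' ∈ Finset.Icc 1 (min (d l).1 m), fext (d l).2.1 j'),
      if (l : ℕ) ≤ fext (d l).2.2 j then 1 else 0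

def dOf (ζ : ℕ → Ω → ℕ) (I η : ℕ → ℕ → Ω → ℕ) (K m : ℕ) (σ : ℕ → ℕ) (ω : Ω) : Dty K m :=
  fun l => (ζ (σ l) ω, fun j => I (σ l) (j+1) ω, fun j => η (σ l) (j+1) ω)

def colG (ζ : ℕ → Ω → ℕ) (I η : ℕ → ℕ → Ω → ℕ) (K : ℕ) (σ : ℕ → ℕ) (ω : Ω) : ℕ :=
  ∑ l : Fin (K+1), ∑ j ∈ Finset.Icc 1 (batchXi ζ I (σ l) ω),
    if (l : ℕ) ≤ η (σ l) j ω then 1 else 0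

def colGm (ζ : ℕ → Ω → ℕ) (I η : ℕ → ℕ → Ω → ℕ) (K m : ℕ) (σ : ℕ → ℕ) (ω : Ω) : ℕ :=
  ∑ l : Fin (K+1),
    ∑ j ∈ Finset.Icc 1 (∑ j' ∈ Finset.Icc 1 (min (ζ (σ l) ω) m), I (σ l) j' ω),
      if (l : ℕ) ≤ η (σ l) j ω then 1 else 0

lemma colGm_eq_gval (ζ : ℕ → Ω → ℕ) (I η : ℕ → ℕ → Ω → ℕ) (K m : ℕ) (σ : ℕ → ℕ)
    (hI01 : ∀ i j ω, I i j ω ≤ 1) (ω : Ω) :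
    colGm ζ I η K m σ ω = gval K m (dOf ζ I η K m σ ω) := by
  unfold colGm gval dOf
  refine Finset.sum_congr rfl fun l _ => ?_
  have hxi : (∑ j' ∈ Finset.Icc 1 (min (ζ (σ l) ω) m), I (σ l) j' ω)
      = ∑ j' ∈ Finset.Icc 1 (min (ζ (σ l) ω) m),
          fext (m := m) (fun j => I (σ l) (j+1) ω) j' := by
    refine Finset.sum_congr rfl fun j' hj' => ?_
    simp only [Finset.mem_Icc] at hj'
    have h1 : j' - 1 < m := by omega
    simp only [fext, h1, dif_pos]
    congr 1
    omega
  have hbound : (∑ j' ∈ Finset.Icc 1 (min (ζ (σ l) ω) m), I (σ l) j' ω) ≤ m := by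
    calc (∑ j' ∈ Finset.Icc 1 (min (ζ (σ l) ω) m), I (σ l) j' ω)
        ≤ ∑ j' ∈ Finset.Icc 1 (min (ζ (σ l) ω) m), 1 :=
          Finset.sum_le_sum fun j' _ => hI01 _ _ _
      _ = min (ζ (σ l) ω) m := by simp [Nat.card_Icc]
      _ ≤ m := min_le_right _ _
  rw [← hxi]
  refine Finset.sum_congr rfl fun j hj => ?_
  simp only [Finset.mem_Icc] at hj
  have h1 : j - 1 < m := by omega
  have : fext (m := m) (fun j0 => η (σ l) (j0+1) ω) j = η (σ l) j ω := by
    simp only [fext, h1, dif_pos]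
    congr 1
    omega
  rw [this]

def bern (r : ℝ) (x : ℕ) : ENNReal :=
  if x = 1 then ENNReal.ofReal r else if x = 0 then 1 - ENNReal.ofReal r else 0

def Dprob [MeasurableSpace Ω] (μ : Measure Ω) (ζ : ℕ → Ω → ℕ) (η : ℕ → ℕ → Ω → ℕ)
    (r : ℝ) (K m : ℕ) (d : Dty K m) : ENNReal :=
  ∏ l : Fin (K+1), (μ (ζ 1 ⁻¹' {(d l).1}) *
    ∏ j : Fin m, (bern r ((d l).2.1 j) * μ (η 1 1 ⁻¹' {(d l).2.2 j})))

def colSets (K m : ℕ) (σ : ℕ → ℕ) (d : Dty K m) : (ℕ ⊕ ℕ ⊕ (ℕ × ℕ) ⊕ (ℕ × ℕ)) → Set ℕ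
  | Sum.inl _ => Set.univ
  | Sum.inr (Sum.inl q) => {x | ∀ l : Fin (K+1), σ l = q → x = (d l).1}
  | Sum.inr (Sum.inr (Sum.inl p)) =>
      {x | ∀ (l : Fin (K+1)) (j : Fin m), (σ l, (j : ℕ)+1) = p → x = (d l).2.1 j}
  | Sum.inr (Sum.inr (Sum.inr p)) =>
      {x | ∀ (l : Fin (K+1)) (j : Fin m), (σ l, (j : ℕ)+1) = p → x = (d l).2.2 j}

section Emeas

variable [MeasurableSpace Ω] (μ : Measure Ω) [IsProbabilityMeasure μ]
    (τ ζ : ℕ → Ω → ℕ) (I η : ℕ → ℕ → Ω → ℕ) (r : ℝ)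

lemma Ilaw (hIm : ∀ i j, Measurable (I i j)) (hI01 : ∀ i j ω, I i j ω ≤ 1)
    (hIr : ∀ i j, μ {ω | I i j ω = 1} = ENNReal.ofReal r) (i j x : ℕ) :
    μ (I i j ⁻¹' {x}) = bern r x := by
  have h1 : I i j ⁻¹' {1} = {ω | I i j ω = 1} := by ext ω; simp [Set.mem_preimage]
  rcases Nat.lt_or_ge x 2 with hx | hx
  · interval_cases x
    · have h0 : I i j ⁻¹' {0} = {ω | I i j ω = 1}ᶜ := by
        ext ω
        have := hI01 i j ω
        simp only [Set.mem_preimage, Set.mem_singleton_iff, Set.mem_compl_iff, Set.mem_setOf_eq]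
        omega
      rw [h0, measure_compl (by rw [← h1]; exact hIm i j (measurableSet_singleton 1))
        (measure_ne_top μ _), hIr i j]
      simp [bern, measure_univ]
    · rw [h1, hIr i j]; simp [bern]
  · have h2 : I i j ⁻¹' {x} = ∅ := by
      ext ω
      have := hI01 i j ω
      simp only [Set.mem_preimage, Set.mem_singleton_iff, Set.mem_empty_iff_false, iff_false]
      omega
    have hx1 : x ≠ 1 := by omega
    have hx0 : x ≠ 0 := by omega
    rw [h2]
    simp [bern, hx0, hx1]

lemma Emeas (hζm : ∀ i, Measurable (ζ i)) (hIm : ∀ i j, Measurable (I i j))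
    (hηm : ∀ i j, Measurable (η i j))
    (hI01 : ∀ i j ω, I i j ω ≤ 1)
    (hIr : ∀ i j, μ {ω | I i j ω = 1} = ENNReal.ofReal r)
    (hindep : iIndepFun (allVars τ ζ I η) μ)
    (hζid : ∀ i, IdentDistrib (ζ i) (ζ 1) μ μ)
    (hηid : ∀ i j, IdentDistrib (η i j) (η 1 1) μ μ)
    (K m : ℕ) (σ : ℕ → ℕ) (hσ : Function.Injective (fun l : Fin (K+1) => σ l))
    (d : Dty K m) :
    μ {ω | dOf ζ I η K m σ ω = d} = Dprob μ ζ η r K m d := by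
  classical
  set ι := (ℕ ⊕ ℕ ⊕ (ℕ × ℕ) ⊕ (ℕ × ℕ))
  set A : Finset ι := Finset.univ.image (fun l : Fin (K+1) => (Sum.inr (Sum.inl (σ l)) : ι)) with hA
  set B : Finset ι := Finset.univ.image
    (fun p : Fin (K+1) × Fin m => (Sum.inr (Sum.inr (Sum.inl (σ p.1, (p.2 : ℕ)+1))) : ι)) with hB
  set C : Finset ι := Finset.univ.image
    (fun p : Fin (K+1) × Fin m => (Sum.inr (Sum.inr (Sum.inr (σ p.1, (p.2 : ℕ)+1))) : ι)) with hC
  set S : Finset ι := A ∪ B ∪ C with hS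
  have hsets : ∀ i ∈ S, MeasurableSet (colSets K m σ d i) := fun i _ => trivial
  -- the event as an intersection over S
  have h1 : {ω | dOf ζ I η K m σ ω = d} = ⋂ i ∈ S, allVars τ ζ I η i ⁻¹' colSets K m σ d i := by
    ext ω
    simp only [Set.mem_setOf_eq, Set.mem_iInter]
    constructor
    · intro hd i hi
      have hd' : ∀ l : Fin (K+1), ζ (σ l) ω = (d l).1 ∧
          (∀ j : Fin m, I (σ l) ((j:ℕ)+1) ω = (d l).2.1 j) ∧
          (∀ j : Fin m, η (σ l) ((j:ℕ)+1) ω = (d l).2.2 j) := by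
        intro l
        have hcf := congrFun hd l
        simp only [dOf, Prod.ext_iff] at hcf
        exact ⟨hcf.1, fun j => congrFun hcf.2.1 j, fun j => congrFun hcf.2.2 j⟩
      simp only [hS, hA, hB, hC, Finset.mem_union, Finset.mem_image, Finset.mem_univ,
        true_and] at hi
      rcases hi with (⟨l0, rfl⟩ | ⟨p0, rfl⟩) | ⟨p0, rfl⟩
      · intro l hl
        show ζ (σ l0) ω = (d l).1
        rw [← hl]
        exact (hd' l).1
      · intro l j hlj
        have e1 : σ (l : ℕ) = σ (p0.1 : ℕ) := congrArg Prod.fst hlj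
        have e2 : (j : ℕ) + 1 = (p0.2 : ℕ) + 1 := congrArg Prod.snd hlj
        show I (σ p0.1) ((p0.2 : ℕ)+1) ω = (d l).2.1 j
        rw [← e1, ← e2]
        exact (hd' l).2.1 j
      · intro l j hlj
        have e1 : σ (l : ℕ) = σ (p0.1 : ℕ) := congrArg Prod.fst hlj
        have e2 : (j : ℕ) + 1 = (p0.2 : ℕ) + 1 := congrArg Prod.snd hlj
        show η (σ p0.1) ((p0.2 : ℕ)+1) ω = (d l).2.2 j
        rw [← e1, ← e2]
        exact (hd' l).2.2 j
    · intro h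
      funext l
      have hζl : ζ (σ l) ω = (d l).1 := by
        have hmem : (Sum.inr (Sum.inl (σ l)) : ι) ∈ S := by
          simp only [hS, hA, Finset.mem_union, Finset.mem_image, Finset.mem_univ, true_and]
          exact Or.inl (Or.inl ⟨l, rfl⟩)
        exact h _ hmem l rfl
      have hIl : ∀ j : Fin m, I (σ l) ((j:ℕ)+1) ω = (d l).2.1 j := by
        intro j
        have hmem : (Sum.inr (Sum.inr (Sum.inl (σ l, (j:ℕ)+1))) : ι) ∈ S := by
          simp only [hS, hB, Finset.mem_union, Finset.mem_image, Finset.mem_univ, true_and]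
          exact Or.inl (Or.inr ⟨(l, j), rfl⟩)
        exact h _ hmem l j rfl
      have hηl : ∀ j : Fin m, η (σ l) ((j:ℕ)+1) ω = (d l).2.2 j := by
        intro j
        have hmem : (Sum.inr (Sum.inr (Sum.inr (σ l, (j:ℕ)+1))) : ι) ∈ S := by
          simp only [hS, hC, Finset.mem_union, Finset.mem_image, Finset.mem_univ, true_and]
          exact Or.inr ⟨(l, j), rfl⟩
        exact h _ hmem l j rfl
      have hdl : d l = ((d l).1, (d l).2.1, (d l).2.2) := rfl
      show dOf ζ I η K m σ ω l = d l
      rw [hdl]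
      simp only [dOf]
      rw [Prod.mk.injEq, Prod.mk.injEq]
      exact ⟨hζl, funext hIl, funext hηl⟩
  rw [h1, hindep.measure_inter_preimage_eq_mul S hsets]
  have hAB : Disjoint A B := by
    rw [Finset.disjoint_left]
    rintro a ha hb
    rw [hA, Finset.mem_image] at ha
    rw [hB, Finset.mem_image] at hb
    obtain ⟨l, -, rfl⟩ := ha
    obtain ⟨p, -, hp⟩ := hb
    cases hp
  have hABC : Disjoint (A ∪ B) C := by
    rw [Finset.disjoint_left]
    rintro a ha hc
    rw [hC, Finset.mem_image] at hc
    obtain ⟨p, -, rfl⟩ := hc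
    rw [Finset.mem_union, hA, hB, Finset.mem_image, Finset.mem_image] at ha
    rcases ha with ⟨l, -, hl⟩ | ⟨q, -, hq⟩
    · cases hl
    · cases hq
  have injA : ∀ x ∈ (Finset.univ : Finset (Fin (K+1))), ∀ y ∈ (Finset.univ : Finset (Fin (K+1))),
      (Sum.inr (Sum.inl (σ x)) : ι) = Sum.inr (Sum.inl (σ y)) → x = y := by
    intro x _ y _ hxy
    apply hσ
    simpa using hxy
  have injBC : ∀ x ∈ (Finset.univ : Finset (Fin (K+1) × Fin m)),
      ∀ y ∈ (Finset.univ : Finset (Fin (K+1) × Fin m)),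
      ((σ x.1, (x.2 : ℕ)+1) : ℕ × ℕ) = (σ y.1, (y.2 : ℕ)+1) → x = y := by
    intro x _ y _ hxy
    have h1 : σ (x.1 : ℕ) = σ (y.1 : ℕ) := congrArg Prod.fst hxy
    have h2 : (x.2 : ℕ) + 1 = (y.2 : ℕ) + 1 := congrArg Prod.snd hxy
    have hx1 : x.1 = y.1 := hσ h1
    have hx2 : x.2 = y.2 := by
      apply Fin.ext
      omega
    exact Prod.ext hx1 hx2
  have injB : ∀ x ∈ (Finset.univ : Finset (Fin (K+1) × Fin m)),
      ∀ y ∈ (Finset.univ : Finset (Fin (K+1) × Fin m)),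
      (Sum.inr (Sum.inr (Sum.inl (σ x.1, (x.2 : ℕ)+1))) : ι)
        = Sum.inr (Sum.inr (Sum.inl (σ y.1, (y.2 : ℕ)+1))) → x = y := by
    intro x hx y hy hxy
    refine injBC x hx y hy ?_
    simpa using hxy
  have injC : ∀ x ∈ (Finset.univ : Finset (Fin (K+1) × Fin m)),
      ∀ y ∈ (Finset.univ : Finset (Fin (K+1) × Fin m)),
      (Sum.inr (Sum.inr (Sum.inr (σ x.1, (x.2 : ℕ)+1))) : ι)
        = Sum.inr (Sum.inr (Sum.inr (σ y.1, (y.2 : ℕ)+1))) → x = y := by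
    intro x hx y hy hxy
    refine injBC x hx y hy ?_
    simpa using hxy
  have hApr : (∏ i ∈ A, μ (allVars τ ζ I η i ⁻¹' colSets K m σ d i))
      = ∏ l : Fin (K+1), μ (ζ 1 ⁻¹' {(d l).1}) := by
    rw [hA, Finset.prod_image injA]
    refine Finset.prod_congr rfl fun l _ => ?_
    have hv : allVars τ ζ I η (Sum.inr (Sum.inl (σ l))) = ζ (σ l) := rfl
    have hset : colSets K m σ d (Sum.inr (Sum.inl (σ l))) = {(d l).1} := by
      ext x
      simp only [colSets, Set.mem_setOf_eq, Set.mem_singleton_iff]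
      constructor
      · intro hx
        exact hx l rfl
      · intro hx l' hl'
        have : l' = l := hσ hl'
        rw [this]
        exact hx
    rw [hv, hset]
    exact (hζid (σ l)).measure_mem_eq (measurableSet_singleton _)
  have hBpr : (∏ i ∈ B, μ (allVars τ ζ I η i ⁻¹' colSets K m σ d i))
      = ∏ p : Fin (K+1) × Fin m, bern r ((d p.1).2.1 p.2) := by
    rw [hB, Finset.prod_image injB]
    refine Finset.prod_congr rfl fun p _ => ?_
    have hv : allVars τ ζ I η (Sum.inr (Sum.inr (Sum.inl (σ p.1, (p.2 : ℕ)+1))))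
        = I (σ p.1) ((p.2 : ℕ)+1) := rfl
    have hset : colSets K m σ d (Sum.inr (Sum.inr (Sum.inl (σ p.1, (p.2 : ℕ)+1))))
        = {(d p.1).2.1 p.2} := by
      ext x
      simp only [colSets, Set.mem_setOf_eq, Set.mem_singleton_iff]
      constructor
      · intro hx
        exact hx p.1 p.2 rfl
      · intro hx l j hlj
        have h1 : σ (l : ℕ) = σ (p.1 : ℕ) := congrArg Prod.fst hlj
        have h2 : (j : ℕ) + 1 = (p.2 : ℕ) + 1 := congrArg Prod.snd hlj
        have e1 : l = p.1 := hσ h1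
        have e2 : j = p.2 := by
          apply Fin.ext
          omega
        rw [e1, e2]
        exact hx
    rw [hv, hset]
    exact Ilaw μ I r hIm hI01 hIr _ _ _
  have hCpr : (∏ i ∈ C, μ (allVars τ ζ I η i ⁻¹' colSets K m σ d i))
      = ∏ p : Fin (K+1) × Fin m, μ (η 1 1 ⁻¹' {(d p.1).2.2 p.2}) := by
    rw [hC, Finset.prod_image injC]
    refine Finset.prod_congr rfl fun p _ => ?_
    have hv : allVars τ ζ I η (Sum.inr (Sum.inr (Sum.inr (σ p.1, (p.2 : ℕ)+1))))
        = η (σ p.1) ((p.2 : ℕ)+1) := rfl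
    have hset : colSets K m σ d (Sum.inr (Sum.inr (Sum.inr (σ p.1, (p.2 : ℕ)+1))))
        = {(d p.1).2.2 p.2} := by
      ext x
      simp only [colSets, Set.mem_setOf_eq, Set.mem_singleton_iff]
      constructor
      · intro hx
        exact hx p.1 p.2 rfl
      · intro hx l j hlj
        have h1 : σ (l : ℕ) = σ (p.1 : ℕ) := congrArg Prod.fst hlj
        have h2 : (j : ℕ) + 1 = (p.2 : ℕ) + 1 := congrArg Prod.snd hlj
        have e1 : l = p.1 := hσ h1
        have e2 : j = p.2 := by
          apply Fin.ext
          omega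
        rw [e1, e2]
        exact hx
    rw [hv, hset]
    exact (hηid _ _).measure_mem_eq (measurableSet_singleton _)
  rw [hS, Finset.prod_union hABC, Finset.prod_union hAB, hApr, hBpr, hCpr]
  simp only [Dprob, Finset.prod_mul_distrib, Fintype.prod_prod_type]
  ring

end Emeas


section Truncation

variable (ζ : ℕ → Ω → ℕ) (I η : ℕ → ℕ → Ω → ℕ)

lemma colGm_le_succ (K : ℕ) (σ : ℕ → ℕ) (ω : Ω) {m m' : ℕ} (hmm' : m ≤ m') :
    colGm ζ I η K m σ ω ≤ colGm ζ I η K m' σ ω := by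
  unfold colGm
  refine Finset.sum_le_sum fun l _ => ?_
  refine Finset.sum_le_sum_of_subset (Finset.Icc_subset_Icc le_rfl ?_)
  refine Finset.sum_le_sum_of_subset (Finset.Icc_subset_Icc le_rfl ?_)
  exact min_le_min le_rfl hmm'

lemma colGm_le_colG (K m : ℕ) (σ : ℕ → ℕ) (ω : Ω) :
    colGm ζ I η K m σ ω ≤ colG ζ I η K σ ω := by
  unfold colGm colG batchXi
  refine Finset.sum_le_sum fun l _ => ?_
  refine Finset.sum_le_sum_of_subset (Finset.Icc_subset_Icc le_rfl ?_)
  refine Finset.sum_le_sum_of_subset (Finset.Icc_subset_Icc le_rfl ?_)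
  exact min_le_left _ _

lemma colGm_eventually (K : ℕ) (σ : ℕ → ℕ) (ω : Ω) :
    ∃ m0 : ℕ, colGm ζ I η K m0 σ ω = colG ζ I η K σ ω := by
  refine ⟨Finset.sup Finset.univ (fun l : Fin (K+1) => ζ (σ l) ω), ?_⟩
  unfold colGm colG batchXi
  refine Finset.sum_congr rfl fun l _ => ?_
  rw [min_eq_left (Finset.le_sup (f := fun l : Fin (K+1) => ζ (σ l) ω) (Finset.mem_univ l))]

variable [MeasurableSpace Ω]

lemma colGm_measurable (hζm : ∀ i, Measurable (ζ i)) (hIm : ∀ i j, Measurable (I i j))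
    (hηm : ∀ i j, Measurable (η i j)) (K m : ℕ) (σ : ℕ → ℕ) :
    Measurable (colGm ζ I η K m σ) := by
  unfold colGm
  apply Finset.measurable_sum
  intro l _
  apply measurable_sum_Icc'
  · exact measurable_sum_Icc' ((hζm _).min measurable_const) (fun j' => hIm _ j')
  · intro j
    exact Measurable.ite ((hηm _ _) measurableSet_Ici) measurable_const measurable_const

lemma colG_measurable (hζm : ∀ i, Measurable (ζ i)) (hIm : ∀ i j, Measurable (I i j))
    (hηm : ∀ i j, Measurable (η i j)) (K : ℕ) (σ : ℕ → ℕ) :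
    Measurable (colG ζ I η K σ) := by
  unfold colG
  apply Finset.measurable_sum
  intro l _
  apply measurable_sum_Icc'
  · exact measurable_sum_Icc' (hζm _) (fun j' => hIm _ j')
  · intro j
    exact Measurable.ite ((hηm _ _) measurableSet_Ici) measurable_const measurable_const

end Truncation

section PerM

variable [MeasurableSpace Ω] (μ : Measure Ω) [IsProbabilityMeasure μ]
    (τ ζ : ℕ → Ω → ℕ) (I η : ℕ → ℕ → Ω → ℕ) (r : ℝ)

lemma dOf_fiber_measurable (hζm : ∀ i, Measurable (ζ i)) (hIm : ∀ i j, Measurable (I i j))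
    (hηm : ∀ i j, Measurable (η i j)) (K m : ℕ) (σ : ℕ → ℕ) (d : Dty K m) :
    MeasurableSet {ω | dOf ζ I η K m σ ω = d} := by
  have hrep : {ω | dOf ζ I η K m σ ω = d}
      = ⋂ l : Fin (K+1), ((ζ (σ l)) ⁻¹' {(d l).1} ∩
          ⋂ j : Fin m, ((I (σ l) ((j:ℕ)+1)) ⁻¹' {(d l).2.1 j} ∩
            (η (σ l) ((j:ℕ)+1)) ⁻¹' {(d l).2.2 j})) := by
    ext ω
    simp only [Set.mem_setOf_eq, Set.mem_iInter, Set.mem_inter_iff, Set.mem_preimage,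
      Set.mem_singleton_iff, funext_iff, dOf, Prod.ext_iff]
    constructor
    · intro h l
      exact ⟨(h l).1, fun j => ⟨(h l).2.1 j, (h l).2.2 j⟩⟩
    · intro h l
      exact ⟨(h l).1, fun j => ((h l).2 j).1, fun j => ((h l).2 j).2⟩
  rw [hrep]
  refine MeasurableSet.iInter fun l => ?_
  refine ((hζm _) (measurableSet_singleton _)).inter (MeasurableSet.iInter fun j => ?_)
  exact ((hIm _ _) (measurableSet_singleton _)).inter ((hηm _ _) (measurableSet_singleton _))

lemma colGm_measure (hζm : ∀ i, Measurable (ζ i)) (hIm : ∀ i j, Measurable (I i j))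
    (hηm : ∀ i j, Measurable (η i j))
    (hI01 : ∀ i j ω, I i j ω ≤ 1)
    (hIr : ∀ i j, μ {ω | I i j ω = 1} = ENNReal.ofReal r)
    (hindep : iIndepFun (allVars τ ζ I η) μ)
    (hζid : ∀ i, IdentDistrib (ζ i) (ζ 1) μ μ)
    (hηid : ∀ i j, IdentDistrib (η i j) (η 1 1) μ μ)
    (K m : ℕ) (σ : ℕ → ℕ) (hσ : Function.Injective (fun l : Fin (K+1) => σ l)) (k : ℕ) :
    μ {ω | colGm ζ I η K m σ ω ≤ k}
      = ∑' d : Dty K m, if gval K m d ≤ k then Dprob μ ζ η r K m d else 0 := by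
  classical
  have hset : {ω | colGm ζ I η K m σ ω ≤ k}
      = ⋃ d : Dty K m, if gval K m d ≤ k then {ω | dOf ζ I η K m σ ω = d} else ∅ := by
    ext ω
    simp only [Set.mem_setOf_eq, Set.mem_iUnion]
    constructor
    · intro h
      refine ⟨dOf ζ I η K m σ ω, ?_⟩
      rw [if_pos (by rwa [← colGm_eq_gval ζ I η K m σ hI01 ω])]
      exact Set.mem_setOf_eq ▸ rfl
    · rintro ⟨d, hd⟩
      split_ifs at hd with h
      · have hdd : dOf ζ I η K m σ ω = d := hd
        rw [colGm_eq_gval ζ I η K m σ hI01 ω, hdd]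
        exact h
      · exact absurd hd (Set.notMem_empty ω)
  have hdisj : Pairwise (Function.onFun Disjoint fun d : Dty K m =>
      if gval K m d ≤ k then {ω | dOf ζ I η K m σ ω = d} else ∅) := by
    intro d d' hne
    refine Set.disjoint_left.2 fun ω h1 h2 => ?_
    have h1' : ω ∈ (if gval K m d ≤ k then {ω | dOf ζ I η K m σ ω = d} else ∅) := h1
    have h2' : ω ∈ (if gval K m d' ≤ k then {ω | dOf ζ I η K m σ ω = d'} else ∅) := h2
    split_ifs at h1' h2'
    · exact hne ((show dOf ζ I η K m σ ω = d from h1').symm.trans h2')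
    · exact absurd h2' (Set.notMem_empty ω)
    · exact absurd h1' (Set.notMem_empty ω)
    · exact absurd h1' (Set.notMem_empty ω)
  have hmeas : ∀ d : Dty K m, MeasurableSet
      (if gval K m d ≤ k then {ω | dOf ζ I η K m σ ω = d} else ∅) := by
    intro d
    split_ifs
    · exact dOf_fiber_measurable ζ I η hζm hIm hηm K m σ d
    · exact MeasurableSet.empty
  rw [hset, measure_iUnion hdisj hmeas]
  refine tsum_congr fun d => ?_
  split_ifs with h
  · exact Emeas μ τ ζ I η r hζm hIm hηm hI01 hIr hindep hζid hηid K m σ hσ d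
  · exact measure_empty

lemma colG_measure_le (hζm : ∀ i, Measurable (ζ i)) (hIm : ∀ i j, Measurable (I i j))
    (hηm : ∀ i j, Measurable (η i j))
    (hI01 : ∀ i j ω, I i j ω ≤ 1)
    (hIr : ∀ i j, μ {ω | I i j ω = 1} = ENNReal.ofReal r)
    (hindep : iIndepFun (allVars τ ζ I η) μ)
    (hζid : ∀ i, IdentDistrib (ζ i) (ζ 1) μ μ)
    (hηid : ∀ i j, IdentDistrib (η i j) (η 1 1) μ μ)
    (K : ℕ) (σ : ℕ → ℕ) (hσ : Function.Injective (fun l : Fin (K+1) => σ l)) (k : ℕ) :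
    μ {ω | colG ζ I η K σ ω ≤ k}
      = ⨅ m : ℕ, ∑' d : Dty K m, if gval K m d ≤ k then Dprob μ ζ η r K m d else 0 := by
  have hiter : {ω | colG ζ I η K σ ω ≤ k} = ⋂ m : ℕ, {ω | colGm ζ I η K m σ ω ≤ k} := by
    ext ω
    simp only [Set.mem_setOf_eq, Set.mem_iInter]
    constructor
    · intro h m
      exact le_trans (colGm_le_colG ζ I η K m σ ω) h
    · intro h
      obtain ⟨m0, hm0⟩ := colGm_eventually ζ I η K σ ω
      rw [← hm0]
      exact h m0
  have hdir : Directed (· ⊇ ·) fun m : ℕ => {ω | colGm ζ I η K m σ ω ≤ k} := by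
    intro m m'
    refine ⟨max m m', fun ω h => ?_, fun ω h => ?_⟩
    · exact le_trans (colGm_le_succ ζ I η K σ ω (le_max_left m m')) h
    · exact le_trans (colGm_le_succ ζ I η K σ ω (le_max_right m m')) h
  have hnull : ∀ m : ℕ, NullMeasurableSet {ω | colGm ζ I η K m σ ω ≤ k} μ := by
    intro m
    exact ((colGm_measurable ζ I η hζm hIm hηm K m σ) measurableSet_Iic).nullMeasurableSet
  rw [hiter, Directed.measure_iInter hnull hdir ⟨0, measure_ne_top μ _⟩]
  exact iInf_congr fun m =>
    colGm_measure μ τ ζ I η r hζm hIm hηm hI01 hIr hindep hζid hηid K m σ hσ k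

lemma colG_identDistrib (hζm : ∀ i, Measurable (ζ i)) (hIm : ∀ i j, Measurable (I i j))
    (hηm : ∀ i j, Measurable (η i j))
    (hI01 : ∀ i j ω, I i j ω ≤ 1)
    (hIr : ∀ i j, μ {ω | I i j ω = 1} = ENNReal.ofReal r)
    (hindep : iIndepFun (allVars τ ζ I η) μ)
    (hζid : ∀ i, IdentDistrib (ζ i) (ζ 1) μ μ)
    (hηid : ∀ i j, IdentDistrib (η i j) (η 1 1) μ μ)
    (K : ℕ) (σ σ' : ℕ → ℕ) (hσ : Function.Injective (fun l : Fin (K+1) => σ l))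
    (hσ' : Function.Injective (fun l : Fin (K+1) => σ' l)) :
    Measure.map (colG ζ I η K σ) μ = Measure.map (colG ζ I η K σ') μ := by
  apply Measure.ext_of_Iic
  intro a
  rw [Measure.map_apply (colG_measurable ζ I η hζm hIm hηm K σ) measurableSet_Iic,
    Measure.map_apply (colG_measurable ζ I η hζm hIm hηm K σ') measurableSet_Iic]
  have h1 : colG ζ I η K σ ⁻¹' Set.Iic a = {ω | colG ζ I η K σ ω ≤ a} := rfl
  have h2 : colG ζ I η K σ' ⁻¹' Set.Iic a = {ω | colG ζ I η K σ' ω ≤ a} := rfl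
  rw [h1, h2,
    colG_measure_le μ τ ζ I η r hζm hIm hηm hI01 hIr hindep hζid hηid K σ hσ a,
    colG_measure_le μ τ ζ I η r hζm hIm hηm hI01 hIr hindep hζid hηid K σ' hσ' a]

end PerM

/-- If `τ₁ = 1` almost surely and the lifetimes are bounded
(`P(η₁₁ ≤ K) = 1`), then the colony size attains the stationary distribution exactly in
finite time: for every `n ≥ K + 1`, `M n` has the same distribution as `𝓜`
(equivalently, `d_TV(M n, 𝓜) = 0`). -/
theorem colony_exact_stationarity_bounded
    {Ω : Type*} [MeasurableSpace Ω] (μ : Measure Ω) [IsProbabilityMeasure μ]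
    (τ ζ : ℕ → Ω → ℕ) (I η : ℕ → ℕ → Ω → ℕ) (r : ℝ) (K : ℕ)
    -- measurability
    (hτm : ∀ i, Measurable (τ i)) (hζm : ∀ i, Measurable (ζ i))
    (hIm : ∀ i j, Measurable (I i j)) (hηm : ∀ i j, Measurable (η i j))
    -- the τ's are positive-integer valued and equal to 1 almost surely
    (hτpos : ∀ i ω, 1 ≤ τ i ω) (hτone : ∀ i, ∀ᵐ ω ∂μ, τ i ω = 1)
    -- the I's are indicators with hatching probability r
    (hI01 : ∀ i j ω, I i j ω ≤ 1) (hr0 : 0 ≤ r) (hr1 : r ≤ 1)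
    (hIr : ∀ i j, μ {ω | I i j ω = 1} = ENNReal.ofReal r)
    -- mutual independence of all the variables
    (hindep : iIndepFun (allVars τ ζ I η) μ)
    -- identical distributions within each family
    (hζid : ∀ i, IdentDistrib (ζ i) (ζ 1) μ μ)
    (hηid : ∀ i j, IdentDistrib (η i j) (η 1 1) μ μ)
    -- finite mean batch size
    (hζint : Integrable (fun ω => (ζ 1 ω : ℝ)) μ)
    -- the lifetimes are bounded by K
    (hK : ∀ᵐ ω ∂μ, η 1 1 ω ≤ K) :
    ∀ n : ℕ, K + 1 ≤ n →
      IdentDistrib (colonyM τ ζ I η n) (statMone ζ I η) μ μ ∧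
      dTV μ (colonyM τ ζ I η n) (statMone ζ I η) = 0 := by
  intro n hn
  -- almost sure good set
  have hηae : ∀ i j : ℕ, ∀ᵐ ω ∂μ, η i j ω ≤ K := by
    intro i j
    have hs : {ω | ¬ η 1 1 ω ≤ K} = η 1 1 ⁻¹' {x | K < x} := by
      ext ω
      simp [not_le]
    have h0 : μ (η 1 1 ⁻¹' {x | K < x}) = 0 := by
      rw [← hs]
      exact ae_iff.1 hK
    have hmm := (hηid i j).measure_mem_eq (s := {x | K < x}) trivial
    rw [ae_iff]
    have hs' : {ω | ¬ η i j ω ≤ K} = η i j ⁻¹' {x | K < x} := by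
      ext ω
      simp [not_le]
    rw [hs', hmm, h0]
  have hgood : ∀ᵐ ω ∂μ, (∀ i, τ i ω = 1) ∧ (∀ i j, η i j ω ≤ K) :=
    (ae_all_iff.2 hτone).and (ae_all_iff.2 fun i => ae_all_iff.2 fun j => hηae i j)
  have hσ₁ : Function.Injective (fun l : Fin (K+1) => (fun l0 : ℕ => n - l0) (l : ℕ)) := by
    intro a b hab
    have ha := a.isLt
    have hb := b.isLt
    apply Fin.ext
    simp only at hab
    omega
  have hσ₂ : Function.Injective (fun l : Fin (K+1) => (fun l0 : ℕ => l0 + 1) (l : ℕ)) := by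
    intro a b hab
    apply Fin.ext
    simp only at hab
    omega
  -- a.e. identification of colonyM with colG (n - ·)
  have hMeq : colonyM τ ζ I η n =ᵐ[μ] colG ζ I η K (fun l => n - l) := by
    refine hgood.mono fun ω hω => ?_
    obtain ⟨hτω, hηω⟩ := hω
    have hren : ∀ i, renewalS τ i ω = i := by
      intro i
      unfold renewalS
      rw [Finset.sum_congr rfl fun k _ => hτω k]
      simp [Nat.card_Icc]
    unfold colonyM
    have hf0 : ∀ i ∈ Finset.Icc 1 n, i ∉ Finset.Icc (n-K) n →
        (∑ j ∈ Finset.Icc 1 (batchXi ζ I i ω),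
          if renewalS τ i ω ≤ n ∧ n ≤ renewalS τ i ω + η i j ω then 1 else 0) = 0 := by
      intro i hi hni
      simp only [Finset.mem_Icc] at hi hni
      refine Finset.sum_eq_zero fun j _ => ?_
      rw [hren i, if_neg]
      rintro ⟨-, h2⟩
      have := hηω i j
      omega
    rw [← Finset.sum_subset (Finset.Icc_subset_Icc (by omega) le_rfl) hf0]
    have hcolG : colG ζ I η K (fun l => n - l) ω
        = ∑ l ∈ Finset.range (K+1), ∑ j ∈ Finset.Icc 1 (batchXi ζ I (n-l) ω),
            if l ≤ η (n-l) j ω then 1 else 0 := by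
      unfold colG
      exact Fin.sum_univ_eq_sum_range
        (fun l => ∑ j ∈ Finset.Icc 1 (batchXi ζ I (n-l) ω), if l ≤ η (n-l) j ω then 1 else 0)
        (K+1)
    rw [hcolG]
    refine Finset.sum_nbij' (i := fun i => n - i) (j := fun l => n - l) ?_ ?_ ?_ ?_ ?_
    · intro a ha
      simp only [Finset.mem_Icc] at ha
      simp only [Finset.mem_range]
      omega
    · intro l hl
      simp only [Finset.mem_range] at hl
      simp only [Finset.mem_Icc]
      omega
    · intro a ha
      simp only [Finset.mem_Icc] at ha
      show n - (n - a) = a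
      omega
    · intro l hl
      simp only [Finset.mem_range] at hl
      show n - (n - l) = l
      omega
    · intro a ha
      simp only [Finset.mem_Icc] at ha
      beta_reduce
      have hna : n - (n - a) = a := by omega
      rw [hna]
      refine Finset.sum_congr rfl fun j _ => ?_
      rw [hren a]
      exact if_congr (by omega) rfl rfl
  -- a.e. identification of statMone with colG (· + 1)
  have hSeq : statMone ζ I η =ᵐ[μ] colG ζ I η K (fun l => l + 1) := by
    refine hgood.mono fun ω hω => ?_
    obtain ⟨-, hηω⟩ := hω
    unfold statMone
    rw [tsum_eq_sum (s := Finset.range (K+1)) ?_]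
    · have hcolG : colG ζ I η K (fun l => l + 1) ω
          = ∑ l ∈ Finset.range (K+1), ∑ j ∈ Finset.Icc 1 (batchXi ζ I (l+1) ω),
              if l ≤ η (l+1) j ω then 1 else 0 := by
        unfold colG
        exact Fin.sum_univ_eq_sum_range
          (fun l => ∑ j ∈ Finset.Icc 1 (batchXi ζ I (l+1) ω), if l ≤ η (l+1) j ω then 1 else 0)
          (K+1)
      rw [hcolG]
      refine Finset.sum_congr rfl fun i _ => Finset.sum_congr rfl fun j _ => ?_
      exact if_congr (by omega) rfl rfl
    · intro i hi
      simp only [Finset.mem_range, not_lt] at hi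
      refine Finset.sum_eq_zero fun j _ => ?_
      rw [if_neg]
      have := hηω (i+1) j
      omega
  have hmap : Measure.map (colG ζ I η K (fun l => n - l)) μ
      = Measure.map (colG ζ I η K (fun l => l + 1)) μ :=
    colG_identDistrib μ τ ζ I η r hζm hIm hηm hI01 hIr hindep hζid hηid K _ _ hσ₁ hσ₂
  have hident : IdentDistrib (colonyM τ ζ I η n) (statMone ζ I η) μ μ := by
    refine ⟨?_, ?_, ?_⟩
    · exact (colG_measurable ζ I η hζm hIm hηm K _).aemeasurable.congr hMeq.symm
    · exact (colG_measurable ζ I η hζm hIm hηm K _).aemeasurable.congr hSeq.symm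
    · rw [Measure.map_congr hMeq, Measure.map_congr hSeq, hmap]
  refine ⟨hident, ?_⟩
  have hBeq : ∀ B : Set ℤ,
      μ ((fun ω => ((colonyM τ ζ I η n ω : ℤ))) ⁻¹' B)
        = μ ((fun ω => ((statMone ζ I η ω : ℤ))) ⁻¹' B) := by
    intro B
    have e1 : (fun ω => ((colonyM τ ζ I η n ω : ℤ))) ⁻¹' B
        = colonyM τ ζ I η n ⁻¹' ((fun k : ℕ => (k : ℤ)) ⁻¹' B) := rfl
    have e2 : (fun ω => ((statMone ζ I η ω : ℤ))) ⁻¹' B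
        = statMone ζ I η ⁻¹' ((fun k : ℕ => (k : ℤ)) ⁻¹' B) := rfl
    rw [e1, e2]
    exact hident.measure_mem_eq trivial
  unfold dTV
  have h0 : (⨆ B : Set ℤ, |(μ ((fun ω => ((colonyM τ ζ I η n ω : ℤ))) ⁻¹' B)).toReal
      - (μ ((fun ω => ((statMone ζ I η ω : ℤ))) ⁻¹' B)).toReal|) = ⨆ _ : Set ℤ, (0:ℝ) :=
    iSup_congr fun B => by rw [hBeq B, sub_self, abs_zero]
  rw [h0, ciSup_const]
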